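/- Define g(q) := 8(2E(q) − K(q))²(2q² − 1) on (1/√2, 1). Then g'(q) = 16/(q(1−q²)) · (2E(q) − K(q)) · f(q) for all q ∈ (1/√2, 1), where f(q) = (4q⁴−5q²+1)K(q) + (−8q⁴+8q²−1)E(q). -/

import Mathlib

open Real Set Filter

noncomputable def Kc (q : ℝ) : ℝ := ∫ θ in (0:ℝ)..(π/2), 1 / Real.sqrt (1 - q^2 * Real.sin θ^2)

noncomputable def Ec (q : ℝ) : ℝ := ∫ θ in (0:ℝ)..(π/2), Real.sqrt (1 - q^2 * Real.sin θ^2)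

noncomputable def fc (q : ℝ) : ℝ := (4*q^4 - 5*q^2 + 1) * Kc q + (-8*q^4 + 8*q^2 - 1) * Ec q


noncomputable def gc (q : ℝ) : ℝ := 8 * (2 * Ec q - Kc q)^2 * (2*q^2 - 1)

/-!
Differentiating under the integral sign gives `E' = (E - K)/k` and
`K' = E/(k(1 - k²)) - K/k`; the latter uses Legendre's identity
`∫₀^{π/2} (1 - k² sin² θ)^{-3/2} dθ = E/(1 - k²)`, which is the fundamental theorem of calculus
applied to `k² sin θ cos θ / √(1 - k² sin² θ)`. The formula for `g'` then follows from the product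
and chain rules and some algebra.
-/

open MeasureTheory intervalIntegral Metric

theorem hasDerivAt_intervalIntegral_of_continuousOn {F F' : ℝ → ℝ → ℝ} {U : Set ℝ}
    {x₀ a b : ℝ} (hU : IsOpen U) (hx₀ : x₀ ∈ U) (hF : ∀ x ∈ U, ContinuousOn (F x) (uIcc a b))
    (hF' : ContinuousOn (Function.uncurry F') (U ×ˢ uIcc a b))
    (hdiff : ∀ x ∈ U, ∀ t ∈ uIcc a b, HasDerivAt (F · t) (F' x t) x) :
    HasDerivAt (fun x => ∫ t in a..b, F x t) (∫ t in a..b, F' x₀ t) x₀ := by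
  obtain ⟨ε, hε, hball⟩ : ∃ ε > 0, closedBall x₀ ε ⊆ U :=
    nhds_basis_closedBall.mem_iff.1 (hU.mem_nhds hx₀)
  obtain ⟨C, hC⟩ := ((isCompact_closedBall x₀ ε).prod isCompact_uIcc).exists_bound_of_continuousOn
    (hF'.mono (prod_mono hball subset_rfl))
  have hF'₀ : ContinuousOn (F' x₀) (uIcc a b) :=
    hF'.comp (f := fun t => (x₀, t)) (by fun_prop) fun t ht => ⟨hx₀, ht⟩
  refine (hasDerivAt_integral_of_dominated_loc_of_deriv_le (bound := fun _ => C)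
    (ball_mem_nhds x₀ hε) ?_ (hF x₀ hx₀).intervalIntegrable
    ((hF'₀.mono uIoc_subset_uIcc).aestronglyMeasurable measurableSet_uIoc) ?_
    intervalIntegrable_const ?_).2
  · filter_upwards [hU.mem_nhds hx₀] with x hx
    exact ((hF x hx).mono uIoc_subset_uIcc).aestronglyMeasurable measurableSet_uIoc
  · exact ae_of_all _ fun t ht x hx =>
      hC (x, t) ⟨ball_subset_closedBall hx, uIoc_subset_uIcc ht⟩
  · exact ae_of_all _ fun t ht x hx =>
      hdiff x (hball (ball_subset_closedBall hx)) t (uIoc_subset_uIcc ht)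

section CompleteEllipticIntegrals

variable {k : ℝ}

lemma one_sub_sq_mul_sin_sq_pos (hk : k ^ 2 < 1) (θ : ℝ) : 0 < 1 - k ^ 2 * sin θ ^ 2 := by
  nlinarith [sin_sq_le_one θ, sq_nonneg k]

lemma sqrt_one_sub_sq_mul_sin_sq_pos (hk : k ^ 2 < 1) (θ : ℝ) :
    0 < √(1 - k ^ 2 * sin θ ^ 2) :=
  sqrt_pos.2 (one_sub_sq_mul_sin_sq_pos hk θ)

lemma isOpen_setOf_sq_lt_one : IsOpen {x : ℝ | x ^ 2 < 1} :=
  isOpen_lt (continuous_pow 2) continuous_const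

lemma hasDerivAt_sqrt_one_sub_sq_mul_sin_sq (hk : k ^ 2 < 1) (θ : ℝ) :
    HasDerivAt (fun x => √(1 - x ^ 2 * sin θ ^ 2))
      (-(k * sin θ ^ 2) / √(1 - k ^ 2 * sin θ ^ 2)) k := by
  have h := (((hasDerivAt_pow 2 k).mul_const (sin θ ^ 2)).const_sub 1).sqrt
    (one_sub_sq_mul_sin_sq_pos hk θ).ne'
  convert h using 1
  have := (sqrt_one_sub_sq_mul_sin_sq_pos hk θ).ne'
  field_simp
  ring

lemma hasDerivAt_one_div_sqrt_one_sub_sq_mul_sin_sq (hk : k ^ 2 < 1) (θ : ℝ) :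
    HasDerivAt (fun x => 1 / √(1 - x ^ 2 * sin θ ^ 2))
      (k * sin θ ^ 2 / ((1 - k ^ 2 * sin θ ^ 2) * √(1 - k ^ 2 * sin θ ^ 2))) k := by
  have h := (hasDerivAt_sqrt_one_sub_sq_mul_sin_sq hk θ).inv
    (sqrt_one_sub_sq_mul_sin_sq_pos hk θ).ne'
  simp only [one_div]
  refine h.congr_deriv ?_
  rw [sq_sqrt (one_sub_sq_mul_sin_sq_pos hk θ).le]
  have := (sqrt_one_sub_sq_mul_sin_sq_pos hk θ).ne'
  have := (one_sub_sq_mul_sin_sq_pos hk θ).ne'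
  field_simp

lemma intervalIntegrable_sqrt_one_sub_sq_mul_sin_sq (k a b : ℝ) :
    IntervalIntegrable (fun θ => √(1 - k ^ 2 * sin θ ^ 2)) volume a b :=
  (by fun_prop : Continuous _).intervalIntegrable _ _

lemma intervalIntegrable_one_div_sqrt_one_sub_sq_mul_sin_sq (hk : k ^ 2 < 1) (a b : ℝ) :
    IntervalIntegrable (fun θ => 1 / √(1 - k ^ 2 * sin θ ^ 2)) volume a b :=
  (continuous_const.div (by fun_prop)
    fun θ => (sqrt_one_sub_sq_mul_sin_sq_pos hk θ).ne').intervalIntegrable _ _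

lemma intervalIntegrable_one_div_mul_sqrt_one_sub_sq_mul_sin_sq (hk : k ^ 2 < 1) (a b : ℝ) :
    IntervalIntegrable
      (fun θ => 1 / ((1 - k ^ 2 * sin θ ^ 2) * √(1 - k ^ 2 * sin θ ^ 2))) volume a b :=
  (continuous_const.div (by fun_prop) fun θ => (mul_pos (one_sub_sq_mul_sin_sq_pos hk θ)
    (sqrt_one_sub_sq_mul_sin_sq_pos hk θ)).ne').intervalIntegrable _ _

lemma hasDerivAt_Ec (hk₀ : k ≠ 0) (hk : k ^ 2 < 1) : HasDerivAt Ec ((Ec k - Kc k) / k) k := by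
  have h := hasDerivAt_intervalIntegral_of_continuousOn (a := 0) (b := π / 2)
    (F := fun x θ => √(1 - x ^ 2 * sin θ ^ 2))
    (F' := fun x θ => -(x * sin θ ^ 2) / √(1 - x ^ 2 * sin θ ^ 2))
    isOpen_setOf_sq_lt_one hk (fun x _ => by fun_prop)
    (ContinuousOn.div (by fun_prop) (by fun_prop)
      fun p hp => (sqrt_one_sub_sq_mul_sin_sq_pos hp.1 p.2).ne')
    (fun x hx θ _ => hasDerivAt_sqrt_one_sub_sq_mul_sin_sq hx θ)
  refine h.congr_deriv ?_
  rw [integral_congr (g := fun θ => (√(1 - k ^ 2 * sin θ ^ 2) - 1 / √(1 - k ^ 2 * sin θ ^ 2)) / k)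
      fun θ _ => ?pointwise,
    intervalIntegral.integral_div,
    integral_sub (intervalIntegrable_sqrt_one_sub_sq_mul_sin_sq k _ _)
      (intervalIntegrable_one_div_sqrt_one_sub_sq_mul_sin_sq hk _ _)]
  · rfl
  · have := (sqrt_one_sub_sq_mul_sin_sq_pos hk θ).ne'
    field_simp
    rw [sq_sqrt (one_sub_sq_mul_sin_sq_pos hk θ).le]
    ring

lemma hasDerivAt_sq_mul_sin_mul_cos_div_sqrt (hk : k ^ 2 < 1) (θ : ℝ) :
    HasDerivAt (fun t => k ^ 2 * (sin t * cos t) / √(1 - k ^ 2 * sin t ^ 2))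
      (√(1 - k ^ 2 * sin θ ^ 2) -
        (1 - k ^ 2) * (1 / ((1 - k ^ 2 * sin θ ^ 2) * √(1 - k ^ 2 * sin θ ^ 2)))) θ := by
  have hΔ := one_sub_sq_mul_sin_sq_pos hk θ
  have hsqrt := sqrt_one_sub_sq_mul_sin_sq_pos hk θ
  have h := (((hasDerivAt_sin θ).mul (hasDerivAt_cos θ)).const_mul (k ^ 2)).div
    (((((hasDerivAt_sin θ).pow 2).const_mul (k ^ 2)).const_sub 1).sqrt hΔ.ne') hsqrt.ne'
  refine h.congr_deriv ?_
  have hsq := sq_sqrt hΔ.le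
  simp only [Pi.mul_apply, Pi.pow_apply]
  field_simp
  rw [hsq]
  linear_combination 2 * k ^ 2 * (1 - k ^ 2 * sin θ ^ 2) * sin_sq_add_cos_sq θ

lemma integral_one_div_mul_sqrt_one_sub_sq_mul_sin_sq (hk : k ^ 2 < 1) :
    ∫ θ in (0 : ℝ)..(π / 2), 1 / ((1 - k ^ 2 * sin θ ^ 2) * √(1 - k ^ 2 * sin θ ^ 2)) =
      Ec k / (1 - k ^ 2) := by
  have hint := intervalIntegrable_one_div_mul_sqrt_one_sub_sq_mul_sin_sq hk 0 (π / 2)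
  have hftc := integral_eq_sub_of_hasDerivAt
    (fun θ _ => hasDerivAt_sq_mul_sin_mul_cos_div_sqrt hk θ)
    ((intervalIntegrable_sqrt_one_sub_sq_mul_sin_sq k _ _).sub (hint.const_mul _))
  rw [integral_sub (intervalIntegrable_sqrt_one_sub_sq_mul_sin_sq k _ _) (hint.const_mul _),
    intervalIntegral.integral_const_mul] at hftc
  simp only [sin_pi_div_two, cos_pi_div_two, sin_zero, cos_zero, mul_zero, zero_mul,
    zero_div, sub_zero] at hftc
  rw [eq_div_iff (by linarith), Ec]
  linarith

lemma hasDerivAt_Kc (hk₀ : k ≠ 0) (hk : k ^ 2 < 1) :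
    HasDerivAt Kc (Ec k / (k * (1 - k ^ 2)) - Kc k / k) k := by
  have h := hasDerivAt_intervalIntegral_of_continuousOn (a := 0) (b := π / 2)
    (F := fun x θ => 1 / √(1 - x ^ 2 * sin θ ^ 2))
    (F' := fun x θ => x * sin θ ^ 2 / ((1 - x ^ 2 * sin θ ^ 2) * √(1 - x ^ 2 * sin θ ^ 2)))
    isOpen_setOf_sq_lt_one hk
    (fun x hx => continuousOn_const.div (by fun_prop)
      fun θ _ => (sqrt_one_sub_sq_mul_sin_sq_pos hx θ).ne')
    (ContinuousOn.div (by fun_prop) (by fun_prop) fun p hp =>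
      (mul_pos (one_sub_sq_mul_sin_sq_pos hp.1 p.2) (sqrt_one_sub_sq_mul_sin_sq_pos hp.1 p.2)).ne')
    (fun x hx θ _ => hasDerivAt_one_div_sqrt_one_sub_sq_mul_sin_sq hx θ)
  refine h.congr_deriv ?_
  have hk₁ : 1 - k ^ 2 ≠ 0 := by linarith
  rw [integral_congr (g := fun θ => (1 / ((1 - k ^ 2 * sin θ ^ 2) * √(1 - k ^ 2 * sin θ ^ 2)) -
      1 / √(1 - k ^ 2 * sin θ ^ 2)) / k) fun θ _ => ?pointwise,
    intervalIntegral.integral_div,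
    integral_sub (intervalIntegrable_one_div_mul_sqrt_one_sub_sq_mul_sin_sq hk _ _)
      (intervalIntegrable_one_div_sqrt_one_sub_sq_mul_sin_sq hk _ _),
    integral_one_div_mul_sqrt_one_sub_sq_mul_sin_sq hk]
  · change (Ec k / (1 - k ^ 2) - Kc k) / k = _
    field_simp
  · have := (one_sub_sq_mul_sin_sq_pos hk θ).ne'
    have := (sqrt_one_sub_sq_mul_sin_sq_pos hk θ).ne'
    field_simp
    ring

end CompleteEllipticIntegrals

theorem stmt_11 (q : ℝ) (hq : q ∈ Ioo (1 / Real.sqrt 2) 1) :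
    HasDerivAt gc (16 / (q * (1 - q^2)) * (2 * Ec q - Kc q) * fc q) q := by
  obtain ⟨hq₀, hq₁⟩ : 0 < q ∧ q < 1 := ⟨lt_trans (by positivity) hq.1, hq.2⟩
  have hq₂ : q ^ 2 < 1 := by nlinarith
  have hq₃ : 1 - q ^ 2 ≠ 0 := by linarith
  have hE := hasDerivAt_Ec hq₀.ne' hq₂
  have hK := hasDerivAt_Kc hq₀.ne' hq₂
  have h := ((((hE.const_mul 2).sub hK).pow 2).const_mul 8).mul
    (((hasDerivAt_pow 2 q).const_mul 2).sub_const 1)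
  refine h.congr_deriv ?_
  simp only [fc, Pi.sub_apply, Pi.pow_apply]
  field_simp
  ring
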